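/- arXiv:2403.05777 — 3 statements merged into one kernel-verified Lean document; each statement's English description precedes it below -/
import Mathlib

section
/- Let n ≥ 1 be an integer, let k₁, …, kₙ be positive real numbers, and let α ∈ (0, nπ). Then there exists a unique real number K > 1 such that Σᵢ₌₁ⁿ 2·arctan(√(K² − 1)/kᵢ) = α. -/
open Real

/-- For `n ≥ 1`, positive reals `k₁, …, kₙ` and `α ∈ (0, nπ)`, there exists a unique
`K > 1` with `∑ i, 2 * arctan (√(K² − 1) / kᵢ) = α`. -/
theorem stmt_2 (n : ℕ) (hn : 1 ≤ n) (k : Fin n → ℝ) (hk : ∀ i, 0 < k i)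
    (α : ℝ) (hα₀ : 0 < α) (hα₁ : α < n * Real.pi) :
    ∃! K : ℝ, 1 < K ∧ ∑ i, 2 * Real.arctan (Real.sqrt (K ^ 2 - 1) / k i) = α := by
  set f : ℝ → ℝ := fun K => ∑ i, 2 * Real.arctan (Real.sqrt (K ^ 2 - 1) / k i) with hf
  have hne : (Finset.univ : Finset (Fin n)).Nonempty := by
    rw [Finset.univ_nonempty_iff]
    exact Fin.pos_iff_nonempty.mp hn
  have hmono : StrictMonoOn f (Set.Ici 1) := by
    intro a ha b hb hab
    apply Finset.sum_lt_sum_of_nonempty hne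
    intro i _
    have ha1 : (1 : ℝ) ≤ a := ha
    have h1 : Real.sqrt (a ^ 2 - 1) < Real.sqrt (b ^ 2 - 1) := by
      apply Real.sqrt_lt_sqrt
      · nlinarith
      · nlinarith
    have h2 : Real.sqrt (a ^ 2 - 1) / k i < Real.sqrt (b ^ 2 - 1) / k i :=
      div_lt_div_of_pos_right h1 (hk i)
    have := Real.arctan_strictMono h2
    linarith
  have hcont : Continuous f := by
    apply continuous_finset_sum
    intro i _
    exact continuous_const.mul (Real.continuous_arctan.comp
      (((continuous_pow 2).sub continuous_const).sqrt.div_const _))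
  have hf1 : f 1 = 0 := by
    simp [hf]
  have htend : Filter.Tendsto f Filter.atTop (nhds (n * Real.pi)) := by
    have : (n : ℝ) * Real.pi = ∑ _i : Fin n, (2 * (Real.pi / 2)) := by
      rw [Finset.sum_const, Finset.card_univ, Fintype.card_fin, nsmul_eq_mul]; ring
    rw [this]
    apply tendsto_finset_sum
    intro i _
    have h1 : Filter.Tendsto (fun K : ℝ => K ^ 2 - 1) Filter.atTop Filter.atTop :=
      Filter.tendsto_atTop_add_const_right _ _ (Filter.tendsto_pow_atTop two_ne_zero)
    have hsq : Filter.Tendsto Real.sqrt Filter.atTop Filter.atTop := by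
      apply Filter.tendsto_atTop_atTop_of_monotone (fun x y h => Real.sqrt_le_sqrt h)
      intro b
      exact ⟨b ^ 2, by rw [Real.sqrt_sq_eq_abs]; exact le_abs_self b⟩
    have h2 : Filter.Tendsto (fun K : ℝ => Real.sqrt (K ^ 2 - 1) / k i)
        Filter.atTop Filter.atTop :=
      (hsq.comp h1).atTop_div_const (hk i)
    have h3 := (Real.tendsto_arctan_atTop.mono_right nhdsWithin_le_nhds).comp h2
    exact h3.const_mul 2
  obtain ⟨M, hM1, hMα⟩ : ∃ M, 1 ≤ M ∧ α < f M := by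
    have h1 := htend.eventually (lt_mem_nhds hα₁)
    have h2 := h1.and (Filter.eventually_ge_atTop (1 : ℝ))
    obtain ⟨M, hM⟩ := h2.exists
    exact ⟨M, hM.2, hM.1⟩
  have hsub : Set.Icc (f 1) (f M) ⊆ f '' Set.Icc 1 M :=
    intermediate_value_Icc hM1 hcont.continuousOn
  obtain ⟨K, hKmem, hKval⟩ := hsub ⟨by rw [hf1]; exact hα₀.le, hMα.le⟩
  have hK1 : 1 < K := by
    rcases lt_or_eq_of_le hKmem.1 with h | h
    · exact h
    · exfalso; rw [← h, hf1] at hKval; linarith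
  refine ⟨K, ⟨hK1, hKval⟩, ?_⟩
  rintro K' ⟨hK'1, hK'val⟩
  exact hmono.injOn (Set.mem_Ici.mpr hK'1.le) (Set.mem_Ici.mpr hK1.le)
    (hK'val.trans hKval.symm)
end

section
/- Fix an integer n ≥ 1 and α ∈ (0, nπ). On the open set S = {k ∈ ℝⁿ : kᵢ > 0 for all i} there exists a continuously differentiable function g : S → ℝ such that for every k ∈ S one has g(k) > 1 and Σᵢ₌₁ⁿ 2·arctan(√(g(k)² − 1)/kᵢ) = α. -/
/-!
Write `F(k, t) = ∑ᵢ 2 arctan (t / kᵢ)`. For fixed `k` with positive entries, `t ↦ F(k, t)` is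
continuous and strictly increasing from `F(k, 0) = 0` to `nπ` at infinity, so it takes the value
`α` at exactly one `t(k) > 0`. Since `∂F/∂t > 0`, the implicit function theorem shows that the
implicit function is smooth, and by uniqueness of the root it agrees with `t` near every point;
hence `t` is smooth. Then `g = √(1 + t²)` works, because `√(g² − 1) = t`.
-/

open Real Filter Topology

open scoped ContDiff

section ImplicitFunction

variable {𝕜 : Type*} [RCLike 𝕜]
  {E₁ : Type*} [NormedAddCommGroup E₁] [NormedSpace 𝕜 E₁] [CompleteSpace E₁]
  {E₂ : Type*} [NormedAddCommGroup E₂] [NormedSpace 𝕜 E₂] [CompleteSpace E₂]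
  {F : Type*} [NormedAddCommGroup F] [NormedSpace 𝕜 F] [CompleteSpace F]

theorem ContDiffAt.contDiffAt_of_eventually_apply_eq {f : E₁ × E₂ → F} {ψ : E₁ → E₂} {x₀ : E₁}
    {n : ℕ∞ω} (hf : ContDiffAt 𝕜 n f (x₀, ψ x₀)) (hn : n ≠ 0)
    (hf₂ : (fderiv 𝕜 f (x₀, ψ x₀) ∘L .inr 𝕜 E₁ E₂).IsInvertible)
    (hψ : ∀ᶠ x in 𝓝 x₀, f (x, ψ x) = f (x₀, ψ x₀))
    (hinj : ∀ᶠ x in 𝓝 x₀, Function.Injective fun y ↦ f (x, y)) :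
    ContDiffAt 𝕜 n ψ x₀ := by
  refine (hf.contDiffAt_implicitFunction hn hf₂).congr_of_eventuallyEq ?_
  filter_upwards [hψ, hinj, hf.eventually_apply_implicitFunction hn hf₂] with x hx hx_inj hx_impl
  exact hx_inj (hx.trans hx_impl.symm)

end ImplicitFunction

theorem ContinuousLinearMap.isInvertible_of_apply_one_ne_zero {𝕜 : Type*} [NormedField 𝕜]
    {L : 𝕜 →L[𝕜] 𝕜} (hL : L 1 ≠ 0) : L.IsInvertible :=
  ⟨ContinuousLinearEquiv.unitsEquivAut 𝕜 (Units.mk0 _ hL), ext_ring (by simp)⟩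

theorem HasDerivAt.fderiv_comp_inr_apply_one {E : Type*} [NormedAddCommGroup E]
    [NormedSpace ℝ E] {f : E × ℝ → ℝ} {x₀ : E} {y₀ c : ℝ} (hf : DifferentiableAt ℝ f (x₀, y₀))
    (hc : HasDerivAt (fun y ↦ f (x₀, y)) c y₀) :
    (fderiv ℝ f (x₀, y₀) ∘L .inr ℝ E ℝ) 1 = c :=
  (hf.hasFDerivAt.comp_hasDerivAt y₀ ((hasDerivAt_const y₀ x₀).prodMk (hasDerivAt_id y₀))).unique hc

section ArctanSum

variable {ι : Type*} [Fintype ι]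

/-- The angle sum of the paper, `∑ᵢ 2 arctan (√(K² − 1) / kᵢ)`, in the variable `t = √(K² − 1)`. -/
noncomputable def arctanSum (k : ι → ℝ) (t : ℝ) : ℝ := ∑ i, 2 * arctan (t / k i)

@[simp]
theorem arctanSum_zero (k : ι → ℝ) : arctanSum k 0 = 0 := by
  simp [arctanSum]

theorem continuous_arctanSum (k : ι → ℝ) : Continuous (arctanSum k) := by
  unfold arctanSum
  fun_prop

theorem strictMono_arctanSum [Nonempty ι] {k : ι → ℝ} (hk : ∀ i, 0 < k i) :
    StrictMono (arctanSum k) := fun _ _ hst ↦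
  Finset.sum_lt_sum_of_nonempty Finset.univ_nonempty fun i _ ↦
    mul_lt_mul_of_pos_left (arctan_strictMono (div_lt_div_of_pos_right hst (hk i))) two_pos

theorem tendsto_arctanSum_atTop {k : ι → ℝ} (hk : ∀ i, 0 < k i) :
    Tendsto (arctanSum k) atTop (𝓝 (Fintype.card ι * π)) := by
  have h : ∀ i, Tendsto (fun t ↦ 2 * arctan (t / k i)) atTop (𝓝 (2 * (π / 2))) := fun i ↦
    ((tendsto_arctan_atTop.mono_right nhdsWithin_le_nhds).comp
      (tendsto_id.atTop_div_const (hk i))).const_mul 2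
  have hlim : (Fintype.card ι : ℝ) * π = ∑ _ : ι, 2 * (π / 2) := by
    simp only [Finset.sum_const, Finset.card_univ, nsmul_eq_mul]
    ring
  rw [hlim]
  exact tendsto_finsetSum _ fun i _ ↦ h i

theorem exists_pos_arctanSum_eq {k : ι → ℝ} (hk : ∀ i, 0 < k i) {α : ℝ} (hα₀ : 0 < α)
    (hα₁ : α < Fintype.card ι * π) : ∃ t, 0 < t ∧ arctanSum k t = α := by
  obtain ⟨T, hT₀, hT⟩ := ((eventually_ge_atTop 0).and
    ((tendsto_arctanSum_atTop hk).eventually (eventually_gt_nhds hα₁))).exists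
  obtain ⟨t, ht, rfl⟩ := intermediate_value_Ioo hT₀ (continuous_arctanSum k).continuousOn
    (by simpa using ⟨hα₀, hT⟩)
  exact ⟨t, ht.1, rfl⟩

theorem hasDerivAt_arctanSum (k : ι → ℝ) (t : ℝ) :
    HasDerivAt (arctanSum k) (∑ i, 2 * (1 / (1 + (t / k i) ^ 2) * (1 / k i))) t :=
  HasDerivAt.fun_sum fun i _ ↦ (((hasDerivAt_id t).div_const (k i)).arctan).const_mul 2

theorem contDiffAt_arctanSum_uncurry {k : ι → ℝ} (hk : ∀ i, k i ≠ 0) (t : ℝ) :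
    ContDiffAt ℝ ω (fun p : (ι → ℝ) × ℝ ↦ arctanSum p.1 p.2) (k, t) := by
  unfold arctanSum
  refine ContDiffAt.sum fun i _ ↦ contDiffAt_const.mul (contDiff_arctan.contDiffAt.comp _ ?_)
  fun_prop (disch := exact hk i)

theorem contDiffOn_of_arctanSum_eq [Nonempty ι] {α : ℝ} {t : (ι → ℝ) → ℝ}
    (ht : ∀ k ∈ {k : ι → ℝ | ∀ i, 0 < k i}, arctanSum k (t k) = α) :
    ContDiffOn ℝ ω t {k : ι → ℝ | ∀ i, 0 < k i} := by
  intro k₀ hk₀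
  have hpos : ∀ᶠ k in 𝓝 k₀, ∀ i, 0 < k i :=
    eventually_all.2 fun i ↦ (continuous_apply i).continuousAt (Ioi_mem_nhds (hk₀ i))
  have hderiv_pos : 0 < ∑ i, 2 * (1 / (1 + (t k₀ / k₀ i) ^ 2) * (1 / k₀ i)) :=
    Finset.sum_pos (fun i _ ↦ by have := hk₀ i; positivity) Finset.univ_nonempty
  have hf := contDiffAt_arctanSum_uncurry (fun i ↦ (hk₀ i).ne') (t k₀)
  refine (hf.contDiffAt_of_eventually_apply_eq ?_ ?_ ?_ ?_).contDiffWithinAt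
  · simp
  · refine ContinuousLinearMap.isInvertible_of_apply_one_ne_zero ?_
    rw [(hasDerivAt_arctanSum k₀ (t k₀)).fderiv_comp_inr_apply_one (hf.differentiableAt (by simp))]
    exact hderiv_pos.ne'
  · filter_upwards [hpos] with k hk
    rw [ht k hk, ht k₀ hk₀]
  · filter_upwards [hpos] with k hk
    exact (strictMono_arctanSum hk).injective

end ArctanSum

/-- For a fixed `n ≥ 1` and `α ∈ (0, nπ)`, on the open set
`S = {k ∈ ℝⁿ : kᵢ > 0 for all i}` there is a `C¹` function `g : S → ℝ` with `g k > 1`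
and `∑ i, 2 * arctan (√(g(k)² − 1) / kᵢ) = α` for every `k ∈ S`. -/
theorem stmt_3 (n : ℕ) (hn : 1 ≤ n) (α : ℝ) (hα₀ : 0 < α) (hα₁ : α < n * Real.pi) :
    ∃ g : (Fin n → ℝ) → ℝ,
      ContDiffOn ℝ 1 g {k : Fin n → ℝ | ∀ i, 0 < k i} ∧
      ∀ k ∈ {k : Fin n → ℝ | ∀ i, 0 < k i},
        1 < g k ∧ ∑ i, 2 * Real.arctan (Real.sqrt ((g k) ^ 2 - 1) / k i) = α := by
  have : Nonempty (Fin n) := ⟨⟨0, hn⟩⟩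
  choose! t ht_pos ht_eq using fun k (hk : k ∈ {k : Fin n → ℝ | ∀ i, 0 < k i}) ↦
    exists_pos_arctanSum_eq hk hα₀ (by simpa using hα₁)
  refine ⟨fun k ↦ √(1 + t k ^ 2), ?_, fun k hk ↦ ⟨?_, ?_⟩⟩
  · exact ((contDiffOn_const.add ((contDiffOn_of_arctanSum_eq ht_eq).pow 2)).sqrt
      fun k _ ↦ by positivity).of_le le_top
  · exact lt_sqrt_of_sq_lt (by nlinarith [pow_pos (ht_pos k hk) 2])
  · rw [sq_sqrt (by positivity), add_sub_cancel_left, sqrt_sq (ht_pos k hk).le]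
    exact ht_eq k hk
end

section
/- For all real numbers k > 1 and a ≥ 1, one has 2k(k² − 1)^{−3/2}·(√(k² − 1)/a − arctan(√(k² − 1)/a)) ≤ 2. -/
/-!
Put `s = √(k² − 1)`, so that `(k² − 1)^(−3/2) = s⁻³` and `1 + s² = k²`, and `x = s / a ≤ s`.
Writing `t = arctan x`, one has `x / (1 + x²) = sin (2t) / 2 ≤ t`, hence
`x − arctan x ≤ x³ / (1 + x²)`, and the right side is increasing in `x ≥ 0`.
The left side of the claim is therefore at most `2k · s⁻³ · s³ / k² = 2 / k ≤ 2`.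
-/

open Real

lemma div_one_add_sq_le_arctan {x : ℝ} (hx : 0 ≤ x) : x / (1 + x ^ 2) ≤ arctan x := by
  have h2t : 0 ≤ 2 * arctan x := by simpa using arctan_nonneg.mpr hx
  have hsin : sin (2 * arctan x) = 2 * (x / (1 + x ^ 2)) := by
    have hpos : 0 < 1 + x ^ 2 := by positivity
    rw [sin_two_mul, sin_arctan, cos_arctan, mul_assoc, div_mul_div_comm, mul_one,
      mul_self_sqrt hpos.le]
  linarith [sin_le h2t]

lemma sub_arctan_le {x : ℝ} (hx : 0 ≤ x) : x - arctan x ≤ x ^ 3 / (1 + x ^ 2) := by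
  have hx3 : x ^ 3 / (1 + x ^ 2) = x - x / (1 + x ^ 2) := by
    field_simp
    ring
  linarith [div_one_add_sq_le_arctan hx]

lemma pow_three_div_one_add_sq_le {x y : ℝ} (hx : 0 ≤ x) (hxy : x ≤ y) :
    x ^ 3 / (1 + x ^ 2) ≤ y ^ 3 / (1 + y ^ 2) := by
  have hy : 0 ≤ y := hx.trans hxy
  rw [div_le_div_iff₀ (by positivity) (by positivity)]
  have h3 : x ^ 3 ≤ y ^ 3 := pow_le_pow_left₀ hx hxy 3
  nlinarith [mul_le_mul_of_nonneg_right hxy (by positivity : 0 ≤ x ^ 2 * y ^ 2)]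

lemma rpow_neg_three_div_two_eq {u : ℝ} (hu : 0 ≤ u) : u ^ (-(3 : ℝ) / 2) = (√u ^ 3)⁻¹ := by
  rw [rpow_div_two_eq_sqrt _ hu, rpow_neg (sqrt_nonneg u), ← rpow_natCast]
  norm_num

/-- For all real `k > 1` and `a ≥ 1`,
`2k(k² − 1)^(−3/2) · (√(k² − 1)/a − arctan(√(k² − 1)/a)) ≤ 2`. -/
theorem stmt_15 (k a : ℝ) (hk : 1 < k) (ha : 1 ≤ a) :
    2 * k * (k ^ 2 - 1) ^ (-(3 : ℝ) / 2) *
      (Real.sqrt (k ^ 2 - 1) / a - Real.arctan (Real.sqrt (k ^ 2 - 1) / a)) ≤ 2 := by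
  have hk2 : 0 < k ^ 2 - 1 := by nlinarith
  rw [rpow_neg_three_div_two_eq hk2.le]
  set s := √(k ^ 2 - 1)
  have hs : 0 < s := sqrt_pos.mpr hk2
  have hs2 : 1 + s ^ 2 = k ^ 2 := by rw [sq_sqrt hk2.le]; ring
  have hx : s / a ≤ s := div_le_self hs.le ha
  have hbound : s / a - arctan (s / a) ≤ s ^ 3 / k ^ 2 :=
    hs2 ▸ (sub_arctan_le (by positivity)).trans (pow_three_div_one_add_sq_le (by positivity) hx)
  calc 2 * k * (s ^ 3)⁻¹ * (s / a - arctan (s / a))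
      ≤ 2 * k * (s ^ 3)⁻¹ * (s ^ 3 / k ^ 2) := by gcongr
    _ = 2 / k := by field_simp
    _ ≤ 2 := div_le_self zero_le_two hk.le
end
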